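/- arXiv:2012.07207 — 2 statements merged into one kernel-verified Lean document; each statement's English description precedes it below -/
import Mathlib

section
/- Let f(k) = ∫_0^1 exp(ψ·(a(r)·k + b(r))) dr with a, b continuous, |a(r)| ≤ θ·(1-r), 0 ≤ b(r) ≤ ψ(1-r) for some θ ∈ (0,1], and let K = 1/θ. Then for any k ∈ [1,K] and L ∈ ℕ, the truncation error of the Taylor series of f at 0 satisfies |f(k) − Σ_{l=0}^{L} f^{(l)}(0) k^l / l!| ≤ e^{2ψ}·ψ^{L+1}/(L+2)!. -/
open Real intervalIntegral Set Finset MeasureTheory Metric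
open scoped Interval

/-! Differentiating under the integral sign, the `l`-th derivative of `f` at `0` is
`∫ (ψ a r)^l e^{b r} dr`, so the Taylor error is the integral of `e^{b r}` times the tail of
the exponential series at `x = ψ a(r) k`. Since `θ k ≤ 1` we have `|x| ≤ ψ (1 - r)`, the tail
is at most `|x|^{L+1} e^{|x|} / (L+1)!`, and integrating `(1 - r)^{L+1}` contributes the
factor `1 / (L+2)`. -/

theorem Real.exp_eq_tsum_pow_div_factorial (x : ℝ) : exp x = ∑' i, x ^ i / i.factorial := by
  rw [exp_eq_exp_ℝ, NormedSpace.exp_eq_tsum_div]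

theorem Real.abs_exp_sub_sum_range_le (x : ℝ) (n : ℕ) :
    |exp x - ∑ i ∈ range n, x ^ i / i.factorial| ≤ |x| ^ n / n.factorial * exp |x| := by
  have hsum : Summable fun i => |x| ^ i / i.factorial := summable_pow_div_factorial |x|
  have htail : Summable fun i => |x| ^ (i + n) / (i + n).factorial :=
    (summable_nat_add_iff n).mpr hsum
  have hterm (i : ℕ) : |x| ^ (i + n) / (i + n).factorial
      ≤ |x| ^ n / n.factorial * (|x| ^ i / i.factorial) := by
    rw [div_mul_div_comm, ← pow_add, add_comm n i]
    gcongr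
    have := Nat.le_of_dvd (Nat.factorial_pos _) (Nat.factorial_mul_factorial_dvd_factorial_add n i)
    rw [add_comm] at this
    exact_mod_cast this
  calc |exp x - ∑ i ∈ range n, x ^ i / i.factorial|
      = |∑' i, x ^ (i + n) / (i + n).factorial| := by
        rw [exp_eq_tsum_pow_div_factorial,
          ← (summable_pow_div_factorial x).sum_add_tsum_nat_add n, add_sub_cancel_left]
    _ ≤ ∑' i, |x| ^ (i + n) / (i + n).factorial := by
        simpa only [Real.norm_eq_abs, abs_div, abs_pow, Nat.abs_cast] using
          norm_tsum_le_tsum_norm (f := fun i => x ^ (i + n) / ((i + n).factorial : ℝ))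
            (by simpa only [Real.norm_eq_abs, abs_div, abs_pow, Nat.abs_cast] using htail)
    _ ≤ ∑' i, |x| ^ n / n.factorial * (|x| ^ i / i.factorial) :=
        Summable.tsum_le_tsum hterm htail (hsum.mul_left (|x| ^ n / n.factorial))
    _ = |x| ^ n / n.factorial * exp |x| := by
        rw [tsum_mul_left, exp_eq_tsum_pow_div_factorial]

theorem abs_exp_mul_exp_sub_sum_range_le {β x ψ u : ℝ} (n : ℕ) (hψ : 0 ≤ ψ)
    (hu : u ∈ Icc (0 : ℝ) 1) (hβ : β ≤ ψ) (hx : |x| ≤ ψ * u) :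
    |exp β * (exp x - ∑ l ∈ range n, x ^ l / l.factorial)|
      ≤ exp (2 * ψ) * ψ ^ n / n.factorial * u ^ n := by
  have hxψ : |x| ≤ ψ := hx.trans (mul_le_of_le_one_right hψ hu.2)
  calc |exp β * (exp x - ∑ l ∈ range n, x ^ l / l.factorial)|
      = exp β * |exp x - ∑ l ∈ range n, x ^ l / l.factorial| := by
        rw [abs_mul, abs_of_pos (exp_pos β)]
    _ ≤ exp ψ * ((ψ * u) ^ n / n.factorial * exp ψ) := by
        grw [abs_exp_sub_sum_range_le, hβ, hx, hxψ]
        exact div_nonneg (pow_nonneg (mul_nonneg hψ hu.1) n) n.factorial.cast_nonneg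
    _ = exp (2 * ψ) * ψ ^ n / n.factorial * u ^ n := by
        rw [two_mul, exp_add, mul_pow]
        ring

theorem abs_integral_le_of_abs_le_mul_one_sub_pow {g : ℝ → ℝ} {M : ℝ} (n : ℕ)
    (hg : IntervalIntegrable g volume 0 1)
    (hbound : ∀ r ∈ Icc (0 : ℝ) 1, |g r| ≤ M * (1 - r) ^ n) :
    |∫ r in (0 : ℝ)..1, g r| ≤ M / (n + 1) :=
  calc |∫ r in (0 : ℝ)..1, g r|
      ≤ ∫ r in (0 : ℝ)..1, |g r| := abs_integral_le_integral_abs zero_le_one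
    _ ≤ ∫ r in (0 : ℝ)..1, M * (1 - r) ^ n :=
        integral_mono_on zero_le_one hg.abs
          (ContinuousOn.intervalIntegrable (by fun_prop)) hbound
    _ = M / (n + 1) := by
        rw [intervalIntegral.integral_const_mul, integral_comp_sub_left (fun y => y ^ n)]
        simp [integral_pow]
        ring

section ParametricExpIntegral

variable {c b : ℝ → ℝ} {s t : ℝ}

theorem hasDerivAt_integral_pow_mul_exp (hc : ContinuousOn c (uIcc s t))
    (hb : ContinuousOn b (uIcc s t)) (n : ℕ) (x₀ : ℝ) :
    HasDerivAt (fun x => ∫ r in s..t, c r ^ n * exp (c r * x + b r))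
      (∫ r in s..t, c r ^ (n + 1) * exp (c r * x₀ + b r)) x₀ := by
  have hcont (m : ℕ) (x : ℝ) :
      ContinuousOn (fun r => c r ^ m * exp (c r * x + b r)) (uIcc s t) := by
    fun_prop
  have hmeas (m : ℕ) (x : ℝ) : AEStronglyMeasurable (fun r => c r ^ m * exp (c r * x + b r))
      (volume.restrict (Ι s t)) :=
    ((hcont m x).mono uIoc_subset_uIcc).aestronglyMeasurable measurableSet_uIoc
  obtain ⟨C, hC⟩ : ∃ C, ∀ p ∈ closedBall x₀ 1 ×ˢ uIcc s t,
      ‖c p.2 ^ (n + 1) * exp (c p.2 * p.1 + b p.2)‖ ≤ C := by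
    have hc' : ContinuousOn (fun p : ℝ × ℝ => c p.2) (closedBall x₀ 1 ×ˢ uIcc s t) :=
      hc.comp continuousOn_snd fun _ => And.right
    have hb' : ContinuousOn (fun p : ℝ × ℝ => b p.2) (closedBall x₀ 1 ×ˢ uIcc s t) :=
      hb.comp continuousOn_snd fun _ => And.right
    exact ((isCompact_closedBall x₀ 1).prod isCompact_uIcc).exists_bound_of_continuousOn
      ((hc'.pow _).mul ((hc'.mul continuousOn_fst).add hb').rexp)
  refine (hasDerivAt_integral_of_dominated_loc_of_deriv_le (bound := fun _ => C)
    (F' := fun x r => c r ^ (n + 1) * exp (c r * x + b r))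
    (closedBall_mem_nhds x₀ one_pos) (.of_forall (hmeas n))
    (hcont n x₀).intervalIntegrable (hmeas (n + 1) x₀) ?_ intervalIntegrable_const ?_).2
  · exact .of_forall fun r hr x hx => hC (x, r) ⟨hx, uIoc_subset_uIcc hr⟩
  · refine .of_forall fun r _ x _ => ?_
    have hlin := ((hasDerivAt_id' x).const_mul (c r)).add_const (b r)
    exact (hlin.exp.const_mul (c r ^ n)).congr_deriv (by ring)

theorem iteratedDeriv_integral_exp (hc : ContinuousOn c (uIcc s t))
    (hb : ContinuousOn b (uIcc s t)) (n : ℕ) :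
    iteratedDeriv n (fun x => ∫ r in s..t, exp (c r * x + b r))
      = fun x => ∫ r in s..t, c r ^ n * exp (c r * x + b r) := by
  induction n with
  | zero => simp only [iteratedDeriv_zero, pow_zero, one_mul]
  | succ n ih =>
    rw [iteratedDeriv_succ, ih]
    exact funext fun x => (hasDerivAt_integral_pow_mul_exp hc hb n x).deriv

theorem integral_exp_sub_sum_range_iteratedDeriv (hc : ContinuousOn c (uIcc s t))
    (hb : ContinuousOn b (uIcc s t)) (n : ℕ) (k : ℝ) :
    (∫ r in s..t, exp (c r * k + b r)) - ∑ l ∈ range n,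
        iteratedDeriv l (fun x => ∫ r in s..t, exp (c r * x + b r)) 0 * k ^ l / l.factorial
      = ∫ r in s..t,
          exp (b r) * (exp (c r * k) - ∑ l ∈ range n, (c r * k) ^ l / l.factorial) := by
  have hint (l : ℕ) : IntervalIntegrable
      (fun r => c r ^ l * exp (c r * 0 + b r) * (k ^ l / l.factorial)) volume s t :=
    ContinuousOn.intervalIntegrable (by fun_prop)
  simp_rw [iteratedDeriv_integral_exp hc hb, mul_div_assoc, ← intervalIntegral.integral_mul_const]
  rw [← intervalIntegral.integral_finsetSum fun l _ => hint l, ← integral_sub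
    (ContinuousOn.intervalIntegrable (by fun_prop)) (ContinuousOn.intervalIntegrable (by fun_prop))]
  refine integral_congr fun r _ => ?_
  simp only [mul_zero, zero_add, exp_add, mul_sub, Finset.mul_sum]
  congr 1
  · ring
  · exact sum_congr rfl fun l _ => by ring

end ParametricExpIntegral

/-- Taylor-truncation error bound for `f k = ∫_0^1 exp (ψ (a r * k + b r)) dr`:
for `k ∈ [1, 1/θ]` the error of the degree-`L` Taylor polynomial at `0` is at
most `e^{2ψ} ψ^{L+1} / (L+2)!`. -/
theorem stmt3 (ψ θ : ℝ) (hψ : 0 < ψ) (hθ : 0 < θ ∧ θ ≤ 1) (a b : ℝ → ℝ)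
    (ha : ContinuousOn a (Set.Icc 0 1)) (hb : ContinuousOn b (Set.Icc 0 1))
    (haB : ∀ r ∈ Set.Icc (0 : ℝ) 1, |a r| ≤ θ * (1 - r))
    (hbB : ∀ r ∈ Set.Icc (0 : ℝ) 1, 0 ≤ b r ∧ b r ≤ ψ * (1 - r))
    (f : ℝ → ℝ)
    (hf : ∀ k, f k = ∫ r in (0 : ℝ)..1, Real.exp (ψ * (a r * k) + b r))
    (K : ℝ) (hK : K = 1 / θ) (k : ℝ) (hk : k ∈ Set.Icc 1 K) (L : ℕ) :
    |f k - ∑ l ∈ Finset.range (L + 1), iteratedDeriv l f 0 * k ^ l / l.factorial|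
      ≤ Real.exp (2 * ψ) * ψ ^ (L + 1) / (L + 2).factorial := by
  set c : ℝ → ℝ := fun r => ψ * a r
  obtain rfl : f = fun x => ∫ r in (0 : ℝ)..1, exp (c r * x + b r) :=
    funext fun x => by simp only [hf, c, mul_assoc]
  have hθk : θ * k ≤ 1 := (le_div_iff₀' hθ.1).mp (hK ▸ hk.2)
  have hc : ContinuousOn c (uIcc 0 1) := by
    rw [Set.uIcc_of_le zero_le_one]
    exact continuousOn_const.mul ha
  rw [← Set.uIcc_of_le zero_le_one] at hb
  have hpoint (r : ℝ) (hr : r ∈ Icc (0 : ℝ) 1) :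
      |exp (b r) * (exp (c r * k) - ∑ l ∈ range (L + 1), (c r * k) ^ l / l.factorial)|
        ≤ exp (2 * ψ) * ψ ^ (L + 1) / (L + 1).factorial * (1 - r) ^ (L + 1) := by
    have hr' : 1 - r ∈ Icc (0 : ℝ) 1 := ⟨by linarith [hr.2], by linarith [hr.1]⟩
    refine abs_exp_mul_exp_sub_sum_range_le (L + 1) hψ.le hr'
      ((hbB r hr).2.trans (mul_le_of_le_one_right hψ.le hr'.2)) ?_
    have hk0 : 0 ≤ k := by linarith [hk.1]
    calc |c r * k| = ψ * |a r| * k := by simp only [c, abs_mul, abs_of_pos hψ, abs_of_nonneg hk0]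
      _ ≤ ψ * (θ * (1 - r)) * k := by grw [haB r hr]
      _ = ψ * (1 - r) * (θ * k) := by ring
      _ ≤ ψ * (1 - r) := mul_le_of_le_one_right (mul_nonneg hψ.le hr'.1) hθk
  calc _ = |∫ r in (0 : ℝ)..1,
          exp (b r) * (exp (c r * k) - ∑ l ∈ range (L + 1), (c r * k) ^ l / l.factorial)| := by
        rw [integral_exp_sub_sum_range_iteratedDeriv hc hb]
    _ ≤ exp (2 * ψ) * ψ ^ (L + 1) / (L + 1).factorial / ((L + 1 : ℕ) + 1) :=
        abs_integral_le_of_abs_le_mul_one_sub_pow _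
          (ContinuousOn.intervalIntegrable (by fun_prop)) hpoint
    _ = exp (2 * ψ) * ψ ^ (L + 1) / (L + 2).factorial := by
        rw [Nat.factorial_succ (L + 1)]
        push_cast
        field_simp
end

section
/- Let I(g) = Σ_{x ∈ Φ} G_x(g)·|x|^{-α} be interference where for each point x of a point process Φ the random gain G_x(g) takes value G_main with probability g and value g_side < G_main with probability 1−g, independently across points. If 0 ≤ g₁ ≤ g₂ ≤ 1, then I(g₁) is stochastically dominated by I(g₂); consequently, for any S > 0 and threshold τ > 0, the coverage probability P(S/I(g) > τ) is non-increasing in g. -/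
/-!
Split the sample space according to which gains take the main-lobe value: the law of `I g` is a
mixture, over configurations `f : ι → Bool`, of the point masses at the monotone values
`∑ i, cond (f i) Gmain gside * w i`, with product Bernoulli(`g`) weights. Raising `g` at one
coordinate moves weight from each configuration with `f i = false` to its partner with
`f i = true`, which cannot decrease the mean of a monotone function of `f`; doing this one
coordinate at a time gives the stochastic dominance. Coverage `τ < S / I` is an antitone event
of the configuration, so the same argument with the order reversed gives its monotonicity.
-/

open MeasureTheory ProbabilityTheory

open scoped ENNReal

def ShiftsMassToTrue (q q' : Bool → ℝ≥0∞) : Prop :=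
  ∃ d, q' true = q true + d ∧ q false = q' false + d

namespace ShiftsMassToTrue

variable {q q' : Bool → ℝ≥0∞}

theorem comp_not (h : ShiftsMassToTrue q q') : ShiftsMassToTrue (q' ∘ not) (q ∘ not) :=
  let ⟨d, htrue, hfalse⟩ := h
  ⟨d, hfalse, htrue⟩

theorem sum_mul_le (h : ShiftsMassToTrue q q') {c : Bool → ℝ≥0∞} (hc : c false ≤ c true) :
    ∑ b, q b * c b ≤ ∑ b, q' b * c b := by
  obtain ⟨d, htrue, hfalse⟩ := h
  simp only [Fintype.sum_bool]
  calc q true * c true + q false * c false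
      = q true * c true + q' false * c false + d * c false := by rw [hfalse]; ring
    _ ≤ q true * c true + q' false * c false + d * c true := by gcongr
    _ = q' true * c true + q' false * c false := by rw [htrue]; ring

end ShiftsMassToTrue

section ProductWeights

variable {ι : Type*} [Fintype ι] [DecidableEq ι]

theorem sum_prod_mul_eq_sum_bool (i₀ : ι) (q : ι → Bool → ℝ≥0∞) (χ : (ι → Bool) → ℝ≥0∞) :
    ∑ f : ι → Bool, (∏ i, q i (f i)) * χ f
      = ∑ b, q i₀ b * ∑ y : {j // j ≠ i₀} → Bool,
          (∏ j, q j.1 (y j)) * χ ((Equiv.funSplitAt i₀ Bool).symm (b, y)) := by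
  rw [← (Equiv.funSplitAt i₀ Bool).symm.sum_comp, Fintype.sum_prod_type]
  refine Fintype.sum_congr _ _ fun b => ?_
  rw [Finset.mul_sum]
  refine Fintype.sum_congr _ _ fun y => ?_
  rw [Fintype.prod_eq_mul_prod_subtype_ne _ i₀, mul_assoc]
  simp [Equiv.funSplitAt_symm_apply, fun j : {j // j ≠ i₀} => j.2]

theorem sum_prod_mul_le_of_shiftsMassToTrue_at (i₀ : ι) {q q' : ι → Bool → ℝ≥0∞}
    (hne : ∀ j ≠ i₀, q' j = q j) (hi₀ : ShiftsMassToTrue (q i₀) (q' i₀))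
    {χ : (ι → Bool) → ℝ≥0∞} (hχ : Monotone χ) :
    ∑ f : ι → Bool, (∏ i, q i (f i)) * χ f ≤ ∑ f : ι → Bool, (∏ i, q' i (f i)) * χ f := by
  rw [sum_prod_mul_eq_sum_bool i₀ q, sum_prod_mul_eq_sum_bool i₀ q']
  simp only [fun j : {j // j ≠ i₀} => hne j j.2]
  refine hi₀.sum_mul_le (Finset.sum_le_sum fun y _ => ?_)
  gcongr
  refine hχ fun i => ?_
  by_cases h : i = i₀ <;> simp [Equiv.funSplitAt_symm_apply, h]

theorem sum_prod_mul_le_of_monotone {q q' : ι → Bool → ℝ≥0∞}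
    (h : ∀ i, ShiftsMassToTrue (q i) (q' i)) {χ : (ι → Bool) → ℝ≥0∞} (hχ : Monotone χ) :
    ∑ f : ι → Bool, (∏ i, q i (f i)) * χ f ≤ ∑ f : ι → Bool, (∏ i, q' i (f i)) * χ f := by
  suffices H : ∀ s : Finset ι, ∑ f : ι → Bool, (∏ i, q i (f i)) * χ f
      ≤ ∑ f : ι → Bool, (∏ i, (if i ∈ s then q' i else q i) (f i)) * χ f by
    simpa using H Finset.univ
  intro s
  induction s using Finset.induction_on with
  | empty => simp
  | insert i₀ s hi₀ ih =>
    refine ih.trans (sum_prod_mul_le_of_shiftsMassToTrue_at i₀ (fun j hj => ?_) ?_ hχ)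
    · simp [hj]
    · simpa [hi₀] using h i₀

theorem sum_prod_mul_le_of_antitone {q q' : ι → Bool → ℝ≥0∞}
    (h : ∀ i, ShiftsMassToTrue (q i) (q' i)) {χ : (ι → Bool) → ℝ≥0∞} (hχ : Antitone χ) :
    ∑ f : ι → Bool, (∏ i, q' i (f i)) * χ f ≤ ∑ f : ι → Bool, (∏ i, q i (f i)) * χ f := by
  have hneg : Function.Involutive fun f : ι → Bool => not ∘ f := fun f => by
    funext i; simp
  rw [← hneg.bijective.sum_comp, ← hneg.bijective.sum_comp (fun f => (∏ i, q i (f i)) * χ f)]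
  exact sum_prod_mul_le_of_monotone (fun i => (h i).comp_not)
    fun f f' hff' => hχ fun i => compl_le_compl (hff' i)

end ProductWeights

section BinaryLaw

variable {Ω ι : Type*} [MeasurableSpace Ω] [Fintype ι] {μ : Measure Ω}
  {G : ι → Ω → ℝ} {a b : ℝ} {p : Bool → ℝ≥0∞}

theorem measure_preimage_singleton_cond
    (ha : ∀ i, μ {ω | G i ω = a} = p true) (hb : ∀ i, μ {ω | G i ω = b} = p false)
    (hind : iIndepFun G μ) (f : ι → Bool) :
    μ ((fun ω i => G i ω) ⁻¹' {fun i => cond (f i) a b}) = ∏ i, p (f i) := by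
  have hinter : (fun ω i => G i ω) ⁻¹' {fun i => cond (f i) a b}
      = ⋂ i, G i ⁻¹' {cond (f i) a b} := by
    ext ω; simp [funext_iff]
  rw [hinter, hind.meas_iInter fun i => ⟨_, measurableSet_singleton _, rfl⟩]
  refine Finset.prod_congr rfl fun i _ => ?_
  cases f i
  · exact hb i
  · exact ha i

theorem ae_forall_eq_or_eq [IsProbabilityMeasure μ] (hG : ∀ i, Measurable (G i)) (hab : a ≠ b)
    (ha : ∀ i, μ {ω | G i ω = a} = p true) (hb : ∀ i, μ {ω | G i ω = b} = p false)
    (hp : p true + p false = 1) :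
    ∀ᵐ ω ∂μ, ∀ i, G i ω = a ∨ G i ω = b := by
  refine ae_all_iff.2 fun i => ?_
  have hmeas : ∀ c, MeasurableSet {ω | G i ω = c} := fun c => hG i (measurableSet_singleton c)
  change ∀ᵐ ω ∂μ, ω ∈ {ω | G i ω = a} ∪ {ω | G i ω = b}
  rw [ae_mem_iff_measure_eq ((hmeas a).union (hmeas b)).nullMeasurableSet,
    measure_union ?_ (hmeas b), ha, hb, hp, measure_univ]
  exact Set.disjoint_left.2 fun ω (hωa : G i ω = a) (hωb : G i ω = b) => hab (hωa ▸ hωb)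

theorem measure_preimage_eq_sum_prod_mul_indicator [DecidableEq ι] [IsProbabilityMeasure μ]
    (hG : ∀ i, Measurable (G i)) (hab : a ≠ b)
    (ha : ∀ i, μ {ω | G i ω = a} = p true) (hb : ∀ i, μ {ω | G i ω = b} = p false)
    (hp : p true + p false = 1) (hind : iIndepFun G μ) (A : Set (ι → ℝ)) :
    μ ((fun ω i => G i ω) ⁻¹' A)
      = ∑ f : ι → Bool, (∏ i, p (f i)) * A.indicator 1 (fun i => cond (f i) a b) := by
  set V : Ω → ι → ℝ := fun ω i => G i ω
  set value : (ι → Bool) → ι → ℝ := fun f i => cond (f i) a b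
  have hvalue : Function.Injective value := fun f f' h => funext fun i => by
    have hi : cond (f i) a b = cond (f' i) a b := congrFun h i
    revert hi
    cases f i <;> cases f' i <;> simp [hab, hab.symm]
  have hcover : μ (⋃ f, V ⁻¹' {value f})ᶜ = 0 := by
    refine mem_ae_iff.1 ((ae_forall_eq_or_eq hG hab ha hb hp).mono fun ω hω => ?_)
    refine Set.mem_iUnion.2 ⟨fun i => decide (G i ω = a), funext fun i => ?_⟩
    rcases hω i with h | h <;> simp [value, V, h, hab.symm]
  have hV : Measurable V := measurable_pi_lambda _ hG
  calc μ (V ⁻¹' A)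
      = μ (⋃ f, V ⁻¹' (A ∩ {value f})) := by
        rw [← measure_inter_conull hcover, Set.inter_iUnion]
        simp only [Set.preimage_inter]
    _ = ∑ f, μ (V ⁻¹' (A ∩ {value f})) := by
        rw [measure_iUnion (fun f f' hff' => ?_) fun f => ?_, tsum_fintype]
        · exact (Set.disjoint_singleton.2 (hvalue.ne hff')).preimage V |>.mono
            (Set.preimage_mono Set.inter_subset_right) (Set.preimage_mono Set.inter_subset_right)
        · exact hV (Set.subsingleton_singleton.anti Set.inter_subset_right).measurableSet
    _ = _ := by
        refine Fintype.sum_congr _ _ fun f => ?_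
        by_cases hf : value f ∈ A
        · rw [Set.inter_singleton_of_mem hf, Set.indicator_of_mem hf,
            measure_preimage_singleton_cond ha hb hind, Pi.one_apply, mul_one]
        · rw [Set.inter_singleton_eq_empty.2 hf, Set.indicator_of_notMem hf]
          simp

end BinaryLaw

def bernoulliWeight (g : ℝ) (b : Bool) : ℝ≥0∞ :=
  cond b (ENNReal.ofReal g) (ENNReal.ofReal (1 - g))

theorem bernoulliWeight_true_add_false {g : ℝ} (hg : g ∈ Set.Icc 0 1) :
    bernoulliWeight g true + bernoulliWeight g false = 1 := by
  rw [bernoulliWeight, bernoulliWeight, cond_true, cond_false,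
    ← ENNReal.ofReal_add hg.1 (by linarith [hg.2]), add_sub_cancel, ENNReal.ofReal_one]

theorem shiftsMassToTrue_bernoulliWeight {g₁ g₂ : ℝ} (h₀ : 0 ≤ g₁) (h₁₂ : g₁ ≤ g₂) (h₂ : g₂ ≤ 1) :
    ShiftsMassToTrue (bernoulliWeight g₁) (bernoulliWeight g₂) := by
  refine ⟨ENNReal.ofReal (g₂ - g₁), ?_, ?_⟩ <;>
    simp only [bernoulliWeight, cond_true, cond_false] <;>
    rw [← ENNReal.ofReal_add (by linarith) (by linarith)] <;> ring_nf

theorem Set.indicator_one_le_indicator_one {β : Type*} {U : Set β} {x y : β} (h : x ∈ U → y ∈ U) :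
    U.indicator (1 : β → ℝ≥0∞) x ≤ U.indicator 1 y := by
  by_cases hx : x ∈ U
  · simp [hx, h hx]
  · simp [hx]

section WeightedCount

variable {ι : Type*} [Fintype ι] {a b : ℝ} {w : ι → ℝ}

theorem monotone_sum_cond_mul (hba : b ≤ a) (hw : ∀ i, 0 ≤ w i) :
    Monotone fun f : ι → Bool => ∑ i, cond (f i) a b * w i := fun f f' hff' =>
  Finset.sum_le_sum fun i _ => by
    have hi := hff' i
    gcongr
    · exact hw i
    · revert hi; cases f i <;> cases f' i <;> simp [hba]

theorem sum_cond_mul_pos [Nonempty ι] (ha : 0 < a) (hb : 0 < b) (hw : ∀ i, 0 < w i)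
    (f : ι → Bool) : 0 < ∑ i, cond (f i) a b * w i :=
  Finset.sum_pos (fun i _ => mul_pos (by cases f i <;> assumption) (hw i)) Finset.univ_nonempty

end WeightedCount

/-- Interference `I(g) = Σ_i G_i(g) · w_i` with i.i.d.-across-points gains taking
the value `Gmain` with probability `g` and `gside < Gmain` with probability
`1 - g`: if `g₁ ≤ g₂` then `I(g₁)` is stochastically dominated by `I(g₂)`, and
consequently the coverage probability `P(S / I(g) > τ)` is non-increasing in `g`. -/
theorem stmt5 {Ω : Type*} [MeasurableSpace Ω] (μ : Measure Ω) [IsProbabilityMeasure μ]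
    {ι : Type*} [Fintype ι] (w : ι → ℝ) (hw : ∀ i, 0 < w i)
    (Gmain gside : ℝ) (hG : gside < Gmain) (hgs : 0 < gside)
    (Gain : ℝ → ι → Ω → ℝ)
    (hmeas : ∀ g i, Measurable (Gain g i))
    (hmarg : ∀ g ∈ Set.Icc (0 : ℝ) 1, ∀ i,
      μ {ω | Gain g i ω = Gmain} = ENNReal.ofReal g ∧
      μ {ω | Gain g i ω = gside} = ENNReal.ofReal (1 - g))
    (hindep : ∀ g ∈ Set.Icc (0 : ℝ) 1, iIndepFun (Gain g) μ)
    (I : ℝ → Ω → ℝ) (hI : ∀ g ω, I g ω = ∑ i, Gain g i ω * w i)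
    (g₁ g₂ : ℝ) (hg : 0 ≤ g₁ ∧ g₁ ≤ g₂ ∧ g₂ ≤ 1) :
    (∀ t : ℝ, μ {ω | t < I g₁ ω} ≤ μ {ω | t < I g₂ ω}) ∧
      ∀ S τ : ℝ, 0 < S → 0 < τ →
        μ {ω | τ < S / I g₂ ω} ≤ μ {ω | τ < S / I g₁ ω} := by
  classical
  obtain ⟨h₁, h₁₂, h₂⟩ := hg
  set v : (ι → Bool) → ℝ := fun f => ∑ i, cond (f i) Gmain gside * w i
  have hv : Monotone v := monotone_sum_cond_mul hG.le fun i => (hw i).le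
  have hlaw : ∀ g ∈ Set.Icc (0 : ℝ) 1, ∀ U : Set ℝ,
      μ {ω | I g ω ∈ U} = ∑ f, (∏ i, bernoulliWeight g (f i)) * U.indicator 1 (v f) := by
    intro g hg U
    simp only [hI]
    exact measure_preimage_eq_sum_prod_mul_indicator (hmeas g) hG.ne' (fun i => (hmarg g hg i).1)
      (fun i => (hmarg g hg i).2) (bernoulliWeight_true_add_false hg) (hindep g hg)
      {x | ∑ i, x i * w i ∈ U}
  have hg₁ : g₁ ∈ Set.Icc (0 : ℝ) 1 := ⟨h₁, h₁₂.trans h₂⟩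
  have hg₂ : g₂ ∈ Set.Icc (0 : ℝ) 1 := ⟨h₁.trans h₁₂, h₂⟩
  have hshift := fun _ : ι => shiftsMassToTrue_bernoulliWeight h₁ h₁₂ h₂
  refine ⟨fun t => ?_, fun S τ hS _ => ?_⟩
  · calc μ {ω | t < I g₁ ω} = _ := hlaw g₁ hg₁ (Set.Ioi t)
      _ ≤ _ := sum_prod_mul_le_of_monotone hshift fun f f' hff' =>
          Set.indicator_one_le_indicator_one fun hf => hf.trans_le (hv hff')
      _ = μ {ω | t < I g₂ ω} := (hlaw g₂ hg₂ (Set.Ioi t)).symm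
  · have hcoverage : Antitone fun f => {x : ℝ | τ < S / x}.indicator (1 : ℝ → ℝ≥0∞) (v f) := by
      rcases isEmpty_or_nonempty ι with _ | _
      · exact fun f f' _ => (Subsingleton.elim f' f) ▸ le_rfl
      · refine fun f f' hff' => Set.indicator_one_le_indicator_one fun hf' => ?_
        exact hf'.trans_le (div_le_div_of_nonneg_left hS.le
          (sum_cond_mul_pos (hgs.trans hG) hgs hw f) (hv hff'))
    calc μ {ω | τ < S / I g₂ ω} = _ := hlaw g₂ hg₂ {x | τ < S / x}
      _ ≤ _ := sum_prod_mul_le_of_antitone hshift hcoverage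
      _ = μ {ω | τ < S / I g₁ ω} := (hlaw g₁ hg₁ _).symm
end
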